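/- Let (X_n, A_n, β_n)_{n≥0} be a Local Learning Process in Model 2 whose jump laws μ_r and μ_g are supported on {e_1, −e_1, e_2, −e_2}. Let q = φ(r | β_0(x, ·)) be the (state-independent) probability of choosing action r at the first visit to any state, let ρ = min{⟨d(μ_r), l⟩, ⟨d(μ_g), l⟩} > 0, and let α be the almost sure limit of (1/n) Σ_{i=1}^n 1(A_i = r). Then q·ρ ≤ α ≤ 1 − (1 − q)·ρ. -/

import Mathlib

/-!
At a first visit to a site the environment there is still `β₀`, so the action is `r` with
probability `q` and `g` with probability `1 - q`. Writing `F_n` for the event that time `n` is a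
first visit, this gives `q P(F_n) ≤ P(A_n = r) ≤ 1 - (1 - q) P(F_n)`.

Every jump is a unit step, so `⟨X_n, l⟩` can exceed its earlier values only at first visits, and
then by at most one: `⟨X_n - X_0, l⟩` is at most the number of first visits up to time `n`. Each
jump has mean at least `ρ` in the direction `l`, so taking expectations gives
`∑_{i ≤ n} P(F_i) ≥ n ρ`. Hence the expected frequency of `r` up to time `n` lies in
`[q ρ, 1 - (1 - q) ρ]`, and by dominated convergence so does its almost sure limit `α`.
-/

open MeasureTheory ProbabilityTheory Filter Set
open scoped ENNReal BigOperators

/-- The two actions, "red" and "green". -/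
inductive Act : Type
  | r : Act
  | g : Act
deriving DecidableEq

instance : MeasurableSpace Act := ⊤

/-- Euclidean embedding of `ℤ²` into `ℝ²`. -/
def toR2 (x : ℤ × ℤ) : ℝ × ℝ := ((x.1 : ℝ), (x.2 : ℝ))

/-- The euclidean inner product on `ℝ²`. -/
def dot (u v : ℝ × ℝ) : ℝ := u.1 * v.1 + u.2 * v.2

/-- The drift (mean) of a measure on `ℤ²`. -/
noncomputable def drift (ν : Measure (ℤ × ℤ)) : ℝ × ℝ :=
  (∫ ξ, ((ξ.1 : ℝ)) ∂ν, ∫ ξ, ((ξ.2 : ℝ)) ∂ν)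

/-- The jump measure associated with each action. -/
def actM (μr μg : Measure (ℤ × ℤ)) : Act → Measure (ℤ × ℤ)
  | Act.r => μr
  | Act.g => μg

/-- The σ-algebra of the past `(X_0, A_0, …, A_{n−1}, X_n)` (actions strictly before `n`). -/
def pastX {Ω : Type*} (X : ℕ → Ω → ℤ × ℤ) (A : ℕ → Ω → Act) (n : ℕ) :
    MeasurableSpace Ω :=
  MeasurableSpace.comap
    (fun ω => (fun i : Fin (n + 1) => X i ω, fun i : Fin n => A i ω)) inferInstance

/-- The σ-algebra of the past `(X_0, A_0, …, X_n, A_n)` (including the action at time `n`). -/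
def pastA {Ω : Type*} (X : ℕ → Ω → ℤ × ℤ) (A : ℕ → Ω → Act) (n : ℕ) :
    MeasurableSpace Ω :=
  MeasurableSpace.comap
    (fun ω => (fun i : Fin (n + 1) => X i ω, fun i : Fin (n + 1) => A i ω)) inferInstance

/-- A Local Learning Process (LLP) in Model 2: a process `(X_n, A_n, β_n)` with decision
rule `φ` and update rule `ψ` such that `A_n ∼ φ(· | β_n(X_n, ·))` given the past,
`X_{n+1} − X_n ∼ μ_{A_n}` given the past, the environment is updated locally, the initial
environment is deterministic and state-invariant, and every action has positive
probability at a first visit. -/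
structure LLP2 (μr μg : Measure (ℤ × ℤ)) (Ω : Type*) [MeasurableSpace Ω]
    (μ : Measure Ω) where
  X : ℕ → Ω → ℤ × ℤ
  A : ℕ → Ω → Act
  β : ℕ → Ω → ℤ × ℤ → Act → ℝ
  φ : (Act → ℝ) → Act → ℝ
  ψ : (Act → ℝ) → (Act → ℝ) → ℤ × ℤ → Act → ℝ
  meas_X : ∀ n, Measurable (X n)
  meas_A : ∀ n, Measurable (A n)
  meas_β : ∀ n x a, Measurable fun ω => β n ω x a
  φ_nonneg : ∀ b a, 0 ≤ φ b a
  φ_sum : ∀ b, φ b Act.r + φ b Act.g = 1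
  β0_det : ∀ ω ω' x, β 0 ω x = β 0 ω' x
  β0_inv : ∀ ω x y, β 0 ω x = β 0 ω y
  φ0_pos : ∀ ω x a, 0 < φ (β 0 ω x) a
  update : ∀ n ω, β (n + 1) ω (X n ω) (A n ω) =
    ψ (β n ω (X n ω)) (β n ω (X (n + 1) ω)) (X (n + 1) ω - X n ω) (A n ω)
  update_frozen : ∀ n ω x a, (x, a) ≠ (X n ω, A n ω) → β (n + 1) ω x a = β n ω x a
  decision : ∀ n a (H : Set Ω), MeasurableSet[pastX X A n] H →
    (μ ({ω | A n ω = a} ∩ H)).toReal = ∫ ω in H, φ (β n ω (X n ω)) a ∂μ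
  transition : ∀ n (ξ : ℤ × ℤ) (H : Set Ω), MeasurableSet[pastA X A n] H →
    (μ ({ω | X (n + 1) ω - X n ω = ξ} ∩ H)).toReal
      = ∫ ω in H, ((actM μr μg (A n ω)) {ξ}).toReal ∂μ

instance : Fintype Act := ⟨{Act.r, Act.g}, fun a => by cases a <;> simp⟩

instance : DiscreteMeasurableSpace Act := ⟨fun _ => trivial⟩

instance (μr μg : Measure (ℤ × ℤ)) [IsProbabilityMeasure μr] [IsProbabilityMeasure μg]
    (a : Act) : IsProbabilityMeasure (actM μr μg a) := by
  cases a <;> assumption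

open Finset in
theorem le_add_sum_firstVisit {α : Type*} [DecidableEq α] (x : ℕ → α) (f : α → ℝ)
    (hf : ∀ i, f (x (i + 1)) ≤ f (x i) + 1) (n : ℕ) :
    f (x n) ≤ f (x 0) + ∑ i ∈ Icc 1 n, if ∀ j < i, x j ≠ x i then 1 else 0 := by
  -- A revisit lands on an earlier value, so only first visits can raise the running maximum.
  suffices h : ∀ j ≤ n, f (x j) ≤ f (x 0) + ∑ i ∈ Icc 1 n, if ∀ j < i, x j ≠ x i then 1 else 0
    from h n le_rfl
  induction n with
  | zero => intro j hj; simp [Nat.le_zero.1 hj]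
  | succ m ih =>
    rw [sum_Icc_succ_top (by omega)]
    intro j hj
    obtain hjm | rfl := Nat.le_succ_iff.1 hj
    · have hnonneg : (0 : ℝ) ≤ if ∀ k < m + 1, x k ≠ x (m + 1) then 1 else 0 := by
        split_ifs <;> norm_num
      linarith [ih j hjm]
    · split_ifs with hnew
      · linarith [ih m le_rfl, hf m]
      · obtain ⟨k, hk, hxk⟩ : ∃ k < m + 1, x k = x (m + 1) := by simpa using hnew
        linarith [hxk ▸ ih k (Nat.lt_succ_iff.1 hk)]

theorem MeasureTheory.integrable_of_measure_compl_eq_zero {α : Type*} [MeasurableSpace α]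
    [Countable α] [MeasurableSingletonClass α] {ν : Measure α} [IsFiniteMeasure ν]
    {S : Set α} (hS : S.Finite) (hν : ν Sᶜ = 0) (f : α → ℝ) : Integrable f ν := by
  obtain ⟨C, hC⟩ := (hS.image fun ξ => ‖f ξ‖).bddAbove
  refine .of_bound (measurable_of_countable f).aestronglyMeasurable C ?_
  filter_upwards [measure_eq_zero_iff_ae_notMem.1 hν] with ξ hξ
  exact hC ⟨ξ, not_not.1 hξ, rfl⟩

theorem MeasureTheory.integrable_ite_one {Ω : Type*} [MeasurableSpace Ω] {μ : Measure Ω}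
    [IsFiniteMeasure μ] {p : Ω → Prop} [DecidablePred p] (hp : MeasurableSet {ω | p ω}) :
    Integrable (fun ω => if p ω then (1 : ℝ) else 0) μ :=
  (integrable_const 1).mono'
    (Measurable.ite hp measurable_const measurable_const).aestronglyMeasurable
    (ae_of_all _ fun ω => by split_ifs <;> simp)

theorem MeasureTheory.integral_ite_one {Ω : Type*} [MeasurableSpace Ω] {μ : Measure Ω}
    {p : Ω → Prop} [DecidablePred p] (hp : MeasurableSet {ω | p ω}) :
    ∫ ω, (if p ω then (1 : ℝ) else 0) ∂μ = μ.real {ω | p ω} := by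
  rw [← integral_indicator_one hp]
  congr with ω
  simp [Set.indicator_apply]

open Finset in
theorem abs_inv_mul_sum_ite_le_one (p : ℕ → Prop) [DecidablePred p] (n : ℕ) :
    |(n : ℝ)⁻¹ * ∑ i ∈ Icc 1 n, if p i then (1 : ℝ) else 0| ≤ 1 := by
  rw [sum_boole, abs_of_nonneg (by positivity)]
  refine inv_mul_le_one_of_le₀ ?_ n.cast_nonneg
  exact_mod_cast (card_filter_le _ _).trans (by simp)

open Finset Topology in
theorem MeasureTheory.tendsto_inv_mul_sum_measureReal {Ω : Type*} [MeasurableSpace Ω]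
    {μ : Measure Ω} [IsProbabilityMeasure μ] (p : ℕ → Ω → Prop) [∀ i, DecidablePred (p i)]
    (hp : ∀ i, MeasurableSet {ω | p i ω}) {α : ℝ}
    (hα : ∀ᵐ ω ∂μ, Tendsto (fun n : ℕ => (n : ℝ)⁻¹ * ∑ i ∈ Icc 1 n,
      if p i ω then (1 : ℝ) else 0) atTop (𝓝 α)) :
    Tendsto (fun n : ℕ => (n : ℝ)⁻¹ * ∑ i ∈ Icc 1 n, μ.real {ω | p i ω}) atTop (𝓝 α) := by
  have hint : ∀ i, Integrable (fun ω => if p i ω then (1 : ℝ) else 0) μ := fun i =>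
    integrable_ite_one (hp i)
  have hlim := tendsto_integral_of_dominated_convergence (fun _ => (1 : ℝ))
    (fun n => ((integrable_finsetSum _ fun i _ => hint i).const_mul _).aestronglyMeasurable)
    (integrable_const 1) (fun n => ae_of_all _ fun ω => abs_inv_mul_sum_ite_le_one _ n) hα
  simpa only [integral_const_mul, integral_finsetSum _ fun i _ => hint i,
    integral_ite_one (hp _), integral_const, probReal_univ, smul_eq_mul, one_mul] using hlim

open Finset in
theorem inv_mul_sum_mem_Icc {q ρ : ℝ} (hq₀ : 0 ≤ q) (hq₁ : q ≤ 1) {p f : ℕ → ℝ}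
    (hpf : ∀ i, p i ∈ Set.Icc (q * f i) (1 - (1 - q) * f i)) {n : ℕ} (hn : 0 < n)
    (hf : n * ρ ≤ ∑ i ∈ Icc 1 n, f i) :
    (n : ℝ)⁻¹ * ∑ i ∈ Icc 1 n, p i ∈ Set.Icc (q * ρ) (1 - (1 - q) * ρ) := by
  have hn' : (0 : ℝ) < n := by exact_mod_cast hn
  have hlo : q * ∑ i ∈ Icc 1 n, f i ≤ ∑ i ∈ Icc 1 n, p i := by
    rw [mul_sum]; exact sum_le_sum fun i _ => (hpf i).1
  have hhi : ∑ i ∈ Icc 1 n, p i ≤ n - (1 - q) * ∑ i ∈ Icc 1 n, f i := by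
    calc ∑ i ∈ Icc 1 n, p i ≤ ∑ i ∈ Icc 1 n, (1 - (1 - q) * f i) :=
          sum_le_sum fun i _ => (hpf i).2
      _ = n - (1 - q) * ∑ i ∈ Icc 1 n, f i := by simp [sum_sub_distrib, mul_sum]
  rw [Set.mem_Icc, le_inv_mul_iff₀ hn', inv_mul_le_iff₀ hn']
  constructor <;> nlinarith

theorem dot_toR2_sub (x y : ℤ × ℤ) (l : ℝ × ℝ) :
    dot (toR2 (x - y)) l = dot (toR2 x) l - dot (toR2 y) l := by
  simp only [dot, toR2, Prod.fst_sub, Prod.snd_sub, Int.cast_sub]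
  ring

theorem dot_drift {ν : Measure (ℤ × ℤ)} (h₁ : Integrable (fun ξ : ℤ × ℤ => (ξ.1 : ℝ)) ν)
    (h₂ : Integrable (fun ξ : ℤ × ℤ => (ξ.2 : ℝ)) ν) (l : ℝ × ℝ) :
    dot (drift ν) l = ∫ ξ, dot (toR2 ξ) l ∂ν := by
  simp only [dot, drift, toR2]
  rw [integral_add (h₁.mul_const _) (h₂.mul_const _), integral_mul_const, integral_mul_const]

def unitSteps : Set (ℤ × ℤ) := {(1, 0), (-1, 0), (0, 1), (0, -1)}

theorem unitSteps_finite : unitSteps.Finite := by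
  simp [unitSteps]

theorem dot_toR2_le_one {ξ : ℤ × ℤ} (hξ : ξ ∈ unitSteps) {l : ℝ × ℝ} (hl : dot l l = 1) :
    dot (toR2 ξ) l ≤ 1 := by
  simp only [unitSteps, Set.mem_insert_iff, Set.mem_singleton_iff] at hξ
  simp only [dot] at hl
  rcases hξ with rfl | rfl | rfl | rfl <;> simp [dot, toR2] <;>
    nlinarith [sq_nonneg (l.1 - 1), sq_nonneg (l.1 + 1), sq_nonneg (l.2 - 1), sq_nonneg (l.2 + 1)]

namespace LLP2

variable {μr μg : Measure (ℤ × ℤ)} {Ω : Type*} [MeasurableSpace Ω] {μ : Measure Ω}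
  (L : LLP2 μr μg Ω μ)

def firstVisit (n : ℕ) : Set Ω := {ω | ∀ j < n, L.X j ω ≠ L.X n ω}

def jump (n : ℕ) (ω : Ω) : ℤ × ℤ := L.X (n + 1) ω - L.X n ω

theorem dot_toR2_jump (l : ℝ × ℝ) (n : ℕ) (ω : Ω) :
    dot (toR2 (L.jump n ω)) l = dot (toR2 (L.X (n + 1) ω)) l - dot (toR2 (L.X n ω)) l :=
  dot_toR2_sub _ _ l

theorem measurable_jump (n : ℕ) : Measurable (L.jump n) :=
  (L.meas_X (n + 1)).sub (L.meas_X n)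

theorem measurableSet_action (n : ℕ) (a : Act) : MeasurableSet {ω | L.A n ω = a} :=
  L.meas_A n (measurableSet_singleton a)

theorem setOf_action_g (n : ℕ) : {ω | L.A n ω = Act.g} = {ω | L.A n ω = Act.r}ᶜ := by
  ext ω
  cases h : L.A n ω <;> simp [h]

theorem measurableSet_firstVisit_pastX (n : ℕ) :
    MeasurableSet[pastX L.X L.A n] (L.firstVisit n) := by
  refine ⟨Prod.fst ⁻¹' {x | ∀ j : Fin n, x j.castSucc ≠ x (Fin.last n)},
    measurable_fst (Set.to_countable _).measurableSet, ?_⟩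
  ext ω
  simp [firstVisit, Fin.forall_iff]

theorem pastX_le (n : ℕ) : pastX L.X L.A n ≤ ‹MeasurableSpace Ω› :=
  ((measurable_pi_lambda _ fun i : Fin (n + 1) => L.meas_X i).prodMk
    (measurable_pi_lambda _ fun i : Fin n => L.meas_A i)).comap_le

theorem measurableSet_firstVisit (n : ℕ) : MeasurableSet (L.firstVisit n) :=
  L.pastX_le n _ (L.measurableSet_firstVisit_pastX n)

theorem beta_eq_beta_zero_of_forall_ne {n : ℕ} {ω : Ω} {x : ℤ × ℤ}
    (h : ∀ j < n, L.X j ω ≠ x) : L.β n ω x = L.β 0 ω x := by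
  induction n with
  | zero => rfl
  | succ n ih =>
    rw [← ih fun j hj => h j (hj.trans n.lt_succ_self)]
    funext a
    exact L.update_frozen n ω x a fun hx => h n n.lt_succ_self (congrArg Prod.fst hx).symm

theorem measureReal_action_inter_firstVisit (n : ℕ) {a : Act} {p : ℝ}
    (hp : ∀ ω x, L.φ (L.β 0 ω x) a = p) :
    μ.real ({ω | L.A n ω = a} ∩ L.firstVisit n) = p * μ.real (L.firstVisit n) := by
  rw [Measure.real, L.decision n a _ (L.measurableSet_firstVisit_pastX n),
    setIntegral_congr_fun (L.measurableSet_firstVisit n)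
      fun ω hω => by rw [L.beta_eq_beta_zero_of_forall_ne hω, hp],
    setIntegral_const, smul_eq_mul, mul_comm]

theorem measureReal_action_r_add_g [IsProbabilityMeasure μ] (n : ℕ) :
    μ.real {ω | L.A n ω = Act.r} + μ.real {ω | L.A n ω = Act.g} = 1 := by
  rw [setOf_action_g, probReal_compl_eq_one_sub (L.measurableSet_action n _)]
  ring

theorem measureReal_action_r_mem_Icc [IsProbabilityMeasure μ] {q : ℝ}
    (hq : ∀ ω x, L.φ (L.β 0 ω x) Act.r = q) (n : ℕ) :
    μ.real {ω | L.A n ω = Act.r} ∈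
      Set.Icc (q * μ.real (L.firstVisit n)) (1 - (1 - q) * μ.real (L.firstVisit n)) := by
  have hqg : ∀ ω x, L.φ (L.β 0 ω x) Act.g = 1 - q := fun ω x => by
    linarith [L.φ_sum (L.β 0 ω x), hq ω x]
  have hle : ∀ a, μ.real ({ω | L.A n ω = a} ∩ L.firstVisit n) ≤ μ.real {ω | L.A n ω = a} :=
    fun a => measureReal_mono Set.inter_subset_left
  constructor
  · linarith [hle .r, L.measureReal_action_inter_firstVisit n hq]
  · linarith [hle .g, L.measureReal_action_inter_firstVisit n hqg, L.measureReal_action_r_add_g n]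

section Probability

variable [IsProbabilityMeasure μ] [IsProbabilityMeasure μr] [IsProbabilityMeasure μg]

theorem measure_jump_inter_action (n : ℕ) (ξ : ℤ × ℤ) (a : Act) :
    μ ({ω | L.jump n ω = ξ} ∩ {ω | L.A n ω = a}) = μ {ω | L.A n ω = a} * actM μr μg a {ξ} := by
  have hpast : MeasurableSet[pastA L.X L.A n] {ω | L.A n ω = a} :=
    ⟨{y | y.2 (Fin.last n) = a}, (Set.to_countable _).measurableSet, by ext; simp⟩
  rw [← ENNReal.toReal_eq_toReal_iff' (measure_ne_top _ _)
      (ENNReal.mul_ne_top (measure_ne_top _ _) (measure_ne_top _ _)), ENNReal.toReal_mul]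
  refine (L.transition n ξ _ hpast).trans ?_
  rw [setIntegral_congr_fun (L.measurableSet_action n a) fun ω (hω : L.A n ω = a) => by
      rw [hω], setIntegral_const, smul_eq_mul]
  rfl

theorem map_jump (n : ℕ) :
    μ.map (L.jump n) = μ {ω | L.A n ω = Act.r} • μr + μ {ω | L.A n ω = Act.g} • μg := by
  refine Measure.ext_of_singleton fun ξ => ?_
  rw [Measure.map_apply (L.measurable_jump n) (measurableSet_singleton ξ),
    ← measure_inter_add_sdiff _ (L.measurableSet_action n Act.r), Set.sdiff_eq, ← setOf_action_g]
  simp only [Measure.add_apply, Measure.smul_apply, smul_eq_mul]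
  exact congrArg₂ (· + ·) (L.measure_jump_inter_action n ξ Act.r)
    (L.measure_jump_inter_action n ξ Act.g)

theorem ae_jump_mem {S : Set (ℤ × ℤ)} (hS : ∀ a, actM μr μg a Sᶜ = 0) :
    ∀ᵐ ω ∂μ, ∀ n, L.jump n ω ∈ S := by
  refine ae_all_iff.2 fun n => ae_of_ae_map (L.measurable_jump n).aemeasurable ?_
  have hr : μr Sᶜ = 0 := hS Act.r
  have hg : μg Sᶜ = 0 := hS Act.g
  rw [L.map_jump n]
  exact mem_ae_iff.2 (by simp [hr, hg])

theorem integrable_comp_jump (n : ℕ) {g : ℤ × ℤ → ℝ} (hr : Integrable g μr)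
    (hg : Integrable g μg) : Integrable (fun ω => g (L.jump n ω)) μ := by
  refine (integrable_map_measure (measurable_of_countable g).aestronglyMeasurable
    (L.measurable_jump n).aemeasurable).1 ?_
  rw [L.map_jump n]
  exact (hr.smul_measure (measure_ne_top _ _)).add_measure (hg.smul_measure (measure_ne_top _ _))

theorem integral_comp_jump (n : ℕ) {g : ℤ × ℤ → ℝ} (hr : Integrable g μr)
    (hg : Integrable g μg) :
    ∫ ω, g (L.jump n ω) ∂μ = μ.real {ω | L.A n ω = Act.r} * ∫ ξ, g ξ ∂μr
      + μ.real {ω | L.A n ω = Act.g} * ∫ ξ, g ξ ∂μg := by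
  rw [← integral_map (L.measurable_jump n).aemeasurable
      (measurable_of_countable g).aestronglyMeasurable, L.map_jump n,
    integral_add_measure (hr.smul_measure (measure_ne_top _ _))
      (hg.smul_measure (measure_ne_top _ _)), integral_smul_measure, integral_smul_measure]
  rfl

theorem le_integral_dot_jump (hsupp : ∀ a, actM μr μg a unitStepsᶜ = 0) {l : ℝ × ℝ} {ρ : ℝ}
    (hρr : ρ ≤ dot (drift μr) l) (hρg : ρ ≤ dot (drift μg) l) (n : ℕ) :
    Integrable (fun ω => dot (toR2 (L.jump n ω)) l) μ ∧
      ρ ≤ ∫ ω, dot (toR2 (L.jump n ω)) l ∂μ := by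
  have hr : ∀ f : ℤ × ℤ → ℝ, Integrable f μr :=
    integrable_of_measure_compl_eq_zero unitSteps_finite (hsupp .r)
  have hg : ∀ f : ℤ × ℤ → ℝ, Integrable f μg :=
    integrable_of_measure_compl_eq_zero unitSteps_finite (hsupp .g)
  refine ⟨L.integrable_comp_jump n (hr fun ξ => dot (toR2 ξ) l) (hg _), ?_⟩
  rw [dot_drift (hr _) (hr _)] at hρr
  rw [dot_drift (hg _) (hg _)] at hρg
  rw [L.integral_comp_jump n (hr fun ξ => dot (toR2 ξ) l) (hg _)]
  have hsum : _ * ρ = 1 * ρ := congrArg (· * ρ) (L.measureReal_action_r_add_g n)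
  linarith [mul_le_mul_of_nonneg_left hρr (measureReal_nonneg (μ := μ) (s := {ω | L.A n ω = .r})),
    mul_le_mul_of_nonneg_left hρg (measureReal_nonneg (μ := μ) (s := {ω | L.A n ω = .g}))]

open Finset in
theorem ae_sum_dot_jump_le_sum_firstVisit (hsupp : ∀ a, actM μr μg a unitStepsᶜ = 0)
    {l : ℝ × ℝ} (hl : dot l l = 1) (n : ℕ) :
    ∀ᵐ ω ∂μ, ∑ i ∈ range n, dot (toR2 (L.jump i ω)) l
      ≤ ∑ i ∈ Icc 1 n, if ∀ j < i, L.X j ω ≠ L.X i ω then 1 else 0 := by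
  filter_upwards [L.ae_jump_mem hsupp] with ω hω
  have hstep : ∀ i, dot (toR2 (L.X (i + 1) ω)) l ≤ dot (toR2 (L.X i ω)) l + 1 := fun i => by
    linarith [L.dot_toR2_jump l i ω, dot_toR2_le_one (hω i) hl]
  simp only [L.dot_toR2_jump, sum_range_sub fun i => dot (toR2 (L.X i ω)) l]
  linarith [le_add_sum_firstVisit (fun i => L.X i ω) (fun x => dot (toR2 x) l) hstep n]

open Finset in
theorem mul_le_sum_measureReal_firstVisit (hsupp : ∀ a, actM μr μg a unitStepsᶜ = 0)
    {l : ℝ × ℝ} (hl : dot l l = 1) {ρ : ℝ} (hρr : ρ ≤ dot (drift μr) l)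
    (hρg : ρ ≤ dot (drift μg) l) (n : ℕ) :
    n * ρ ≤ ∑ i ∈ Icc 1 n, μ.real (L.firstVisit i) := by
  have hjump := L.le_integral_dot_jump hsupp hρr hρg
  have hfirst : ∀ i, Integrable (fun ω => if ∀ j < i, L.X j ω ≠ L.X i ω then (1 : ℝ) else 0) μ :=
    fun i => integrable_ite_one (L.measurableSet_firstVisit i)
  calc (n : ℝ) * ρ = ∑ i ∈ range n, ρ := by simp
    _ ≤ ∑ i ∈ range n, ∫ ω, dot (toR2 (L.jump i ω)) l ∂μ := sum_le_sum fun i _ => (hjump i).2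
    _ = ∫ ω, ∑ i ∈ range n, dot (toR2 (L.jump i ω)) l ∂μ :=
      (integral_finsetSum _ fun i _ => (hjump i).1).symm
    _ ≤ ∫ ω, ∑ i ∈ Icc 1 n, (if ∀ j < i, L.X j ω ≠ L.X i ω then 1 else 0) ∂μ :=
      integral_mono_ae (integrable_finsetSum _ fun i _ => (hjump i).1)
        (integrable_finsetSum _ fun i _ => hfirst i)
        (L.ae_sum_dot_jump_le_sum_firstVisit hsupp hl n)
    _ = ∑ i ∈ Icc 1 n, μ.real (L.firstVisit i) := by
      rw [integral_finsetSum _ fun i _ => hfirst i]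
      exact sum_congr rfl fun i _ => integral_ite_one (L.measurableSet_firstVisit i)

end Probability

end LLP2

theorem statement12_general
    (μr μg : Measure (ℤ × ℤ)) [IsProbabilityMeasure μr] [IsProbabilityMeasure μg]
    (l : ℝ × ℝ) (hl : dot l l = 1)
    (ρ : ℝ) (hρdef : ρ = min (dot (drift μr) l) (dot (drift μg) l))
    {Ω : Type*} [MeasurableSpace Ω] (μ : Measure Ω) [IsProbabilityMeasure μ]
    (L : LLP2 μr μg Ω μ)
    (hsupp : ∀ a, (actM μr μg a)
      ({(1, 0), (-1, 0), (0, 1), (0, -1)} : Set (ℤ × ℤ))ᶜ = 0)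
    (q : ℝ) (hq : ∀ ω x, L.φ (L.β 0 ω x) Act.r = q)
    (α : ℝ)
    (hα : ∀ᵐ ω ∂μ, Tendsto
      (fun n : ℕ => (n : ℝ)⁻¹ *
        ∑ i ∈ Finset.Icc 1 n, (if L.A i ω = Act.r then (1 : ℝ) else 0))
      atTop (nhds α)) :
    q * ρ ≤ α ∧ α ≤ 1 - (1 - q) * ρ := by
  obtain ⟨ω₀⟩ := nonempty_of_isProbabilityMeasure μ
  have hq₀ : 0 ≤ q := hq ω₀ 0 ▸ L.φ_nonneg _ _
  have hq₁ : q ≤ 1 := by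
    linarith [L.φ_nonneg (L.β 0 ω₀ 0) Act.g, L.φ_sum (L.β 0 ω₀ 0), hq ω₀ 0]
  have hlim := tendsto_inv_mul_sum_measureReal (fun i ω => L.A i ω = Act.r)
    (fun i => L.measurableSet_action i _) hα
  have hbounds : ∀ᶠ n : ℕ in atTop, (n : ℝ)⁻¹ * ∑ i ∈ Finset.Icc 1 n,
      μ.real {ω | L.A i ω = Act.r} ∈ Set.Icc (q * ρ) (1 - (1 - q) * ρ) :=
    eventually_atTop.2 ⟨1, fun n hn =>
      inv_mul_sum_mem_Icc hq₀ hq₁ (L.measureReal_action_r_mem_Icc hq) hn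
        (L.mul_le_sum_measureReal_firstVisit hsupp hl (hρdef.trans_le (min_le_left _ _))
          (hρdef.trans_le (min_le_right _ _)) n)⟩
  exact ⟨ge_of_tendsto hlim (hbounds.mono fun _ h => h.1),
    le_of_tendsto hlim (hbounds.mono fun _ h => h.2)⟩

/-- for an LLP in Model 2 with jumps supported on `{±e_1, ±e_2}`,
first-visit probability `q` of action `r`, and a.s. action frequency `α`, one has
`q·ρ ≤ α ≤ 1 − (1 − q)·ρ`. -/
theorem statement12
    (μr μg : Measure (ℤ × ℤ)) [IsProbabilityMeasure μr] [IsProbabilityMeasure μg]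
    (c : ℝ) (hc : 0 < c)
    (hexp : ∀ a, Integrable
      (fun ξ : ℤ × ℤ => Real.exp (c * ((|ξ.1| : ℝ) + (|ξ.2| : ℝ)))) (actM μr μg a))
    (l : ℝ × ℝ) (hl : dot l l = 1)
    (ρ : ℝ) (hρdef : ρ = min (dot (drift μr) l) (dot (drift μg) l)) (hρpos : 0 < ρ)
    {Ω : Type*} [MeasurableSpace Ω] (μ : Measure Ω) [IsProbabilityMeasure μ]
    (L : LLP2 μr μg Ω μ)
    (hsupp : ∀ a, (actM μr μg a)
      ({(1, 0), (-1, 0), (0, 1), (0, -1)} : Set (ℤ × ℤ))ᶜ = 0)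
    (q : ℝ) (hq : ∀ ω x, L.φ (L.β 0 ω x) Act.r = q)
    (α : ℝ)
    (hα : ∀ᵐ ω ∂μ, Tendsto
      (fun n : ℕ => (n : ℝ)⁻¹ *
        ∑ i ∈ Finset.Icc 1 n, (if L.A i ω = Act.r then (1 : ℝ) else 0))
      atTop (nhds α)) :
    q * ρ ≤ α ∧ α ≤ 1 - (1 - q) * ρ :=
  statement12_general μr μg l hl ρ hρdef μ L hsupp q hq α hα
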